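/- Let V, G : ℝ^N → ℝ be smooth, c, c₀, c₁ ∈ ℝ, and suppose: (i) ∂_i∂_j G + c·G·δ_ij = 0 for all i,j (Hessian equation), and (ii) ∇V·∇G - 2(cV + c₀)G + c₁ = 0. Let L(q,p) = ½|p|² + V(q) and let U ⊂ ℝ^{2N} be the open set where cL + c₀ < 0. Define f = √(-2(cL + c₀)) and G^± = ±∇G·p + G·f + c₁/f on U. Then X_L(G^±) = ±f·G^±, where X_L = Σᵢ (∂L/∂pᵢ ∂_{qᵢ} - ∂L/∂qᵢ ∂_{pᵢ}). -/

import Mathlib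

open Real

/-- Partial derivative `∂_i` of a function on `ℝ^N`. -/
noncomputable def pd {N : ℕ} (i : Fin N) (F : (Fin N → ℝ) → ℝ) (x : Fin N → ℝ) : ℝ :=
  deriv (fun t => F (Function.update x i t)) (x i)

/-- Partial derivatives in the `q` and `p` variables on phase space `ℝ^N × ℝ^N`. -/
noncomputable def pdQ {N : ℕ} (i : Fin N) (F : (Fin N → ℝ) × (Fin N → ℝ) → ℝ)
    (x : (Fin N → ℝ) × (Fin N → ℝ)) : ℝ :=
  deriv (fun t => F (Function.update x.1 i t, x.2)) (x.1 i)

noncomputable def pdP {N : ℕ} (i : Fin N) (F : (Fin N → ℝ) × (Fin N → ℝ) → ℝ)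
    (x : (Fin N → ℝ) × (Fin N → ℝ)) : ℝ :=
  deriv (fun t => F (x.1, Function.update x.2 i t)) (x.2 i)

/-- Hamiltonian vector field of `L` on phase space `ℝ^N × ℝ^N`. -/
noncomputable def XL {N : ℕ} (L F : (Fin N → ℝ) × (Fin N → ℝ) → ℝ)
    (x : (Fin N → ℝ) × (Fin N → ℝ)) : ℝ :=
  ∑ i : Fin N, (pdP i L x * pdQ i F x - pdQ i L x * pdP i F x)

lemma pd_hasDerivAt' {N : ℕ} {F : (Fin N → ℝ) → ℝ} {y : Fin N → ℝ} (i : Fin N)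
    (hF : DifferentiableAt ℝ F y) :
    HasDerivAt (fun t => F (Function.update y i t)) (fderiv ℝ F y (Pi.single i 1)) (y i) := by
  have h1 := hasDerivAt_update y i (y i)
  have h2 : HasFDerivAt F (fderiv ℝ F y) (Function.update y i (y i)) := by
    rw [Function.update_eq_self]; exact hF.hasFDerivAt
  simpa [Function.comp_def] using h2.comp_hasDerivAt (y i) h1

lemma pd_eq_fderiv {N : ℕ} {F : (Fin N → ℝ) → ℝ} {y : Fin N → ℝ} (i : Fin N)
    (hF : DifferentiableAt ℝ F y) :
    pd i F y = fderiv ℝ F y (Pi.single i 1) := (pd_hasDerivAt' i hF).deriv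

lemma pd_hasDerivAt {N : ℕ} {F : (Fin N → ℝ) → ℝ} {y : Fin N → ℝ} (i : Fin N)
    (hF : DifferentiableAt ℝ F y) :
    HasDerivAt (fun t => F (Function.update y i t)) (pd i F y) (y i) := by
  rw [pd_eq_fderiv i hF]; exact pd_hasDerivAt' i hF

lemma pd_differentiable {N : ℕ} {G : (Fin N → ℝ) → ℝ} (hG : ContDiff ℝ (⊤ : ℕ∞) G) (j : Fin N) :
    Differentiable ℝ (fun y => pd j G y) := by
  have h1 : Differentiable ℝ (fun y => (fderiv ℝ G y) (Pi.single j 1 : Fin N → ℝ)) := by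
    have := (hG.fderiv_right (m := (⊤ : ℕ∞)) (by simp)).differentiable (by simp)
    exact this.clm_apply (differentiable_const _)
  have h2 : (fun y => pd j G y) = fun y => (fderiv ℝ G y) (Pi.single j 1 : Fin N → ℝ) := by
    funext y; exact pd_eq_fderiv j (hG.differentiable (by simp) y)
  rw [h2]; exact h1

lemma sum_update_apply {N : ℕ} (p : Fin N → ℝ) (i : Fin N) (F : Fin N → ℝ → ℝ) (t : ℝ) :
    ∑ j, F j (Function.update p i t j)
      = F i t + ∑ j ∈ Finset.univ.erase i, F j (p j) := by
  have h : (fun j => F j (Function.update p i t j))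
      = Function.update (fun j => F j (p j)) i (F i t) := by
    funext j; rcases eq_or_ne j i with rfl | hj
    · simp
    · simp [Function.update_of_ne hj]
  rw [h, Finset.sum_update_of_mem (Finset.mem_univ i), Finset.erase_eq]

set_option maxHeartbeats 2000000 in
/-- Ladder functions `G^± = ±∇G·p + Gf + c₁/f`, `f = √(-2(cL+c₀))`, of the
natural Hamiltonian `L = ½|p|² + V` built from solutions of the Hessian
equation and the compatibility condition on `V`. -/
theorem ladder_functions
    (N : ℕ) (V G : (Fin N → ℝ) → ℝ)
    (hV : ContDiff ℝ (⊤ : ℕ∞) V) (hG : ContDiff ℝ (⊤ : ℕ∞) G)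
    (c c₀ c₁ : ℝ)
    (hHess : ∀ (i j : Fin N) (x : Fin N → ℝ),
      pd i (fun y => pd j G y) x + c * G x * (if i = j then (1:ℝ) else 0) = 0)
    (hVcond : ∀ x : Fin N → ℝ,
      (∑ i : Fin N, pd i V x * pd i G x) - 2 * (c * V x + c₀) * G x + c₁ = 0)
    (L : (Fin N → ℝ) × (Fin N → ℝ) → ℝ)
    (hL : ∀ x, L x = (1 / 2) * (∑ i : Fin N, x.2 i ^ 2) + V x.1)
    (f Gplus Gminus : (Fin N → ℝ) × (Fin N → ℝ) → ℝ)
    (hf : ∀ x, f x = Real.sqrt (-2 * (c * L x + c₀)))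
    (hGp : ∀ x, Gplus x = (∑ i : Fin N, pd i G x.1 * x.2 i) + G x.1 * f x + c₁ / f x)
    (hGm : ∀ x, Gminus x = -(∑ i : Fin N, pd i G x.1 * x.2 i) + G x.1 * f x + c₁ / f x) :
    ∀ x : (Fin N → ℝ) × (Fin N → ℝ), c * L x + c₀ < 0 →
      XL L Gplus x = f x * Gplus x ∧ XL L Gminus x = -(f x) * Gminus x := by

  -- substitute the defining equations
  have hL' : L = fun x => (1 / 2) * (∑ i : Fin N, x.2 i ^ 2) + V x.1 := funext hL
  subst hL'
  have hf' : f = fun x => Real.sqrt (-2 * (c * ((1 / 2) * (∑ i : Fin N, x.2 i ^ 2) + V x.1) + c₀)) := by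
    funext x; rw [hf]
  subst hf'
  have hGp' : Gplus = (fun x => (∑ i : Fin N, pd i G x.1 * x.2 i) + G x.1 * Real.sqrt (-2 * (c * ((1 / 2) * (∑ i : Fin N, x.2 i ^ 2) + V x.1) + c₀)) + c₁ / Real.sqrt (-2 * (c * ((1 / 2) * (∑ i : Fin N, x.2 i ^ 2) + V x.1) + c₀))) := by
    funext x; rw [hGp]
  subst hGp'
  have hGm' : Gminus = (fun x => -(∑ i : Fin N, pd i G x.1 * x.2 i) + G x.1 * Real.sqrt (-2 * (c * ((1 / 2) * (∑ i : Fin N, x.2 i ^ 2) + V x.1) + c₀)) + c₁ / Real.sqrt (-2 * (c * ((1 / 2) * (∑ i : Fin N, x.2 i ^ 2) + V x.1) + c₀))) := by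
    funext x; rw [hGm]
  subst hGm'
  rintro ⟨q, p⟩ hx
  have hs : (0:ℝ) < (-2 * (c * ((1 / 2) * (∑ j : Fin N, p j ^ 2) + V q) + c₀)) := by
    have hx' : c * ((1 / 2) * (∑ j : Fin N, p j ^ 2) + V q) + c₀ < 0 := hx
    linarith
  have hfpos : 0 < Real.sqrt (-2 * (c * ((1 / 2) * (∑ j : Fin N, p j ^ 2) + V q) + c₀)) := Real.sqrt_pos.2 hs
  have hfne : Real.sqrt (-2 * (c * ((1 / 2) * (∑ j : Fin N, p j ^ 2) + V q) + c₀)) ≠ 0 := ne_of_gt hfpos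
  -- basic one-dimensional derivatives in the q-directions
  have hVq : ∀ i : Fin N, HasDerivAt (fun t => V (Function.update q i t)) (pd i V q) (q i) :=
    fun i => pd_hasDerivAt i (hV.differentiable (by simp) q)
  have hGq : ∀ i : Fin N, HasDerivAt (fun t => G (Function.update q i t)) (pd i G q) (q i) :=
    fun i => pd_hasDerivAt i (hG.differentiable (by simp) q)
  have hG2 : ∀ i j : Fin N, HasDerivAt (fun t => pd j G (Function.update q i t))
      (pd i (fun y => pd j G y) q) (q i) :=
    fun i j => pd_hasDerivAt i (pd_differentiable hG j q)
  have hHess' : ∀ i j : Fin N,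
      pd i (fun y => pd j G y) q = -(c * G q * (if i = j then (1:ℝ) else 0)) :=
    fun i j => by linarith [hHess i j q]
  have hSq : ∀ i : Fin N, HasDerivAt (fun t => (∑ j : Fin N, pd j G (Function.update q i t) * p j)) (-(c * G q * p i)) (q i) := by
    intro i
    have h := HasDerivAt.fun_sum (fun j (_ : j ∈ Finset.univ) => (hG2 i j).mul_const (p j))
    have hsum : (∑ j : Fin N, pd i (fun y => pd j G y) q * p j) = -(c * G q * p i) := by
      have hterm : ∀ j : Fin N, pd i (fun y => pd j G y) q * p j
          = if i = j then -(c * G q * p j) else 0 := by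
        intro j; rw [hHess' i j]; by_cases hij : i = j <;> simp [hij]
      rw [Finset.sum_congr rfl (fun j _ => hterm j), Finset.sum_ite_eq]
      simp
    rw [hsum] at h
    exact h
  have hLq : ∀ i : Fin N, HasDerivAt
      (fun t => (1 / 2) * (∑ j : Fin N, p j ^ 2) + V (Function.update q i t)) (pd i V q) (q i) :=
    fun i => (hVq i).const_add _
  have hEq : ∀ i : Fin N, HasDerivAt (fun t => (-2 * (c * ((1 / 2) * (∑ j : Fin N, p j ^ 2) + V (Function.update q i t)) + c₀))) (-2 * (c * pd i V q)) (q i) := by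
    intro i
    have h := ((((hVq i).const_add ((1 / 2) * (∑ j : Fin N, p j ^ 2))).const_mul c).add_const c₀).const_mul (-2)
    simpa using h
  -- basic one-dimensional derivatives in the p-directions
  have hSp : ∀ i : Fin N, HasDerivAt (fun t => (∑ j : Fin N, pd j G q * Function.update p i t j)) (pd i G q) (p i) := by
    intro i
    have hfun : (fun t => (∑ j : Fin N, pd j G q * Function.update p i t j))
        = fun t => pd i G q * t + ∑ j ∈ Finset.univ.erase i, pd j G q * p j := by
      funext t; exact sum_update_apply p i (fun j y => pd j G q * y) t
    rw [hfun]
    simpa using ((hasDerivAt_id (p i)).const_mul (pd i G q)).add_const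
      (∑ j ∈ Finset.univ.erase i, pd j G q * p j)
  have hKp : ∀ i : Fin N, HasDerivAt
      (fun t => (1 / 2) * (∑ j : Fin N, Function.update p i t j ^ 2) + V q) (p i) (p i) := by
    intro i
    have hfun : (fun t => (1 / 2) * (∑ j : Fin N, Function.update p i t j ^ 2) + V q)
        = fun t => (1 / 2) * (t ^ 2 + ∑ j ∈ Finset.univ.erase i, p j ^ 2) + V q := by
      funext t; rw [sum_update_apply p i (fun _ y => y ^ 2) t]
    rw [hfun]
    have h := (((hasDerivAt_pow 2 (p i)).add_const
      (∑ j ∈ Finset.univ.erase i, p j ^ 2)).const_mul ((1:ℝ) / 2)).add_const (V q)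
    refine h.congr_deriv ?_
    push_cast
    ring
  have hEp : ∀ i : Fin N, HasDerivAt (fun t => (-2 * (c * ((1 / 2) * (∑ j : Fin N, Function.update p i t j ^ 2) + V q) + c₀))) (-2 * (c * p i)) (p i) := by
    intro i
    have h := (((hKp i).const_mul c).add_const c₀).const_mul (-2)
    simpa using h
  -- derivatives of the ladder functions along coordinate lines
  have hQp : ∀ i : Fin N, HasDerivAt
      (fun t => (∑ j : Fin N, pd j G (Function.update q i t) * p j) + G (Function.update q i t) * Real.sqrt (-2 * (c * ((1 / 2) * (∑ j : Fin N, p j ^ 2) + V (Function.update q i t)) + c₀)) + c₁ / Real.sqrt (-2 * (c * ((1 / 2) * (∑ j : Fin N, p j ^ 2) + V (Function.update q i t)) + c₀)))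
      (-(c * G q * p i) + pd i G q * Real.sqrt (-2 * (c * ((1 / 2) * (∑ j : Fin N, p j ^ 2) + V q) + c₀)) + G q * (-(c * pd i V q) / Real.sqrt (-2 * (c * ((1 / 2) * (∑ j : Fin N, p j ^ 2) + V q) + c₀))) + c * pd i V q * c₁ / Real.sqrt (-2 * (c * ((1 / 2) * (∑ j : Fin N, p j ^ 2) + V q) + c₀)) ^ 3) (q i) := by
    intro i
    have hne : (-2 * (c * ((1 / 2) * (∑ j : Fin N, p j ^ 2) + V (Function.update q i (q i))) + c₀)) ≠ 0 := by
      rw [Function.update_eq_self]; exact ne_of_gt hs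
    have hsq := (hEq i).sqrt hne
    have hne' : (fun t => Real.sqrt (-2 * (c * ((1 / 2) * (∑ j : Fin N, p j ^ 2) + V (Function.update q i t)) + c₀))) (q i) ≠ 0 := by
      simp only [Function.update_eq_self]; exact hfne
    refine HasDerivAt.congr_deriv (((hSq i).add ((hGq i).mul hsq)).add ((hasDerivAt_const (q i) c₁).div hsq hne')) ?_
    simp only [Function.update_eq_self]
    set Fa := Real.sqrt (-2 * (c * ((1 / 2) * (∑ j : Fin N, p j ^ 2) + V q) + c₀)) with hFa
    field_simp [hfne]
    ring
  have hQm : ∀ i : Fin N, HasDerivAt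
      (fun t => -(∑ j : Fin N, pd j G (Function.update q i t) * p j) + G (Function.update q i t) * Real.sqrt (-2 * (c * ((1 / 2) * (∑ j : Fin N, p j ^ 2) + V (Function.update q i t)) + c₀)) + c₁ / Real.sqrt (-2 * (c * ((1 / 2) * (∑ j : Fin N, p j ^ 2) + V (Function.update q i t)) + c₀)))
      ((c * G q * p i) + pd i G q * Real.sqrt (-2 * (c * ((1 / 2) * (∑ j : Fin N, p j ^ 2) + V q) + c₀)) + G q * (-(c * pd i V q) / Real.sqrt (-2 * (c * ((1 / 2) * (∑ j : Fin N, p j ^ 2) + V q) + c₀))) + c * pd i V q * c₁ / Real.sqrt (-2 * (c * ((1 / 2) * (∑ j : Fin N, p j ^ 2) + V q) + c₀)) ^ 3) (q i) := by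
    intro i
    have hne : (-2 * (c * ((1 / 2) * (∑ j : Fin N, p j ^ 2) + V (Function.update q i (q i))) + c₀)) ≠ 0 := by
      rw [Function.update_eq_self]; exact ne_of_gt hs
    have hsq := (hEq i).sqrt hne
    have hne' : (fun t => Real.sqrt (-2 * (c * ((1 / 2) * (∑ j : Fin N, p j ^ 2) + V (Function.update q i t)) + c₀))) (q i) ≠ 0 := by
      simp only [Function.update_eq_self]; exact hfne
    refine HasDerivAt.congr_deriv ((((hSq i).neg).add ((hGq i).mul hsq)).add ((hasDerivAt_const (q i) c₁).div hsq hne')) ?_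
    simp only [Function.update_eq_self]
    set Fa := Real.sqrt (-2 * (c * ((1 / 2) * (∑ j : Fin N, p j ^ 2) + V q) + c₀)) with hFa
    field_simp [hfne]
    ring
  have hPp : ∀ i : Fin N, HasDerivAt
      (fun t => (∑ j : Fin N, pd j G q * Function.update p i t j) + G q * Real.sqrt (-2 * (c * ((1 / 2) * (∑ j : Fin N, Function.update p i t j ^ 2) + V q) + c₀)) + c₁ / Real.sqrt (-2 * (c * ((1 / 2) * (∑ j : Fin N, Function.update p i t j ^ 2) + V q) + c₀)))
      (pd i G q + G q * (-(c * p i) / Real.sqrt (-2 * (c * ((1 / 2) * (∑ j : Fin N, p j ^ 2) + V q) + c₀))) + c * p i * c₁ / Real.sqrt (-2 * (c * ((1 / 2) * (∑ j : Fin N, p j ^ 2) + V q) + c₀)) ^ 3) (p i) := by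
    intro i
    have hne : (-2 * (c * ((1 / 2) * (∑ j : Fin N, Function.update p i (p i) j ^ 2) + V q) + c₀)) ≠ 0 := by
      rw [Function.update_eq_self]; exact ne_of_gt hs
    have hsq := (hEp i).sqrt hne
    have hne' : (fun t => Real.sqrt (-2 * (c * ((1 / 2) * (∑ j : Fin N, Function.update p i t j ^ 2) + V q) + c₀))) (p i) ≠ 0 := by
      simp only [Function.update_eq_self]; exact hfne
    refine HasDerivAt.congr_deriv (((hSp i).add (hsq.const_mul (G q))).add ((hasDerivAt_const (p i) c₁).div hsq hne')) ?_
    simp only [Function.update_eq_self]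
    set Fa := Real.sqrt (-2 * (c * ((1 / 2) * (∑ j : Fin N, p j ^ 2) + V q) + c₀)) with hFa
    field_simp [hfne]
    ring
  have hPm : ∀ i : Fin N, HasDerivAt
      (fun t => -(∑ j : Fin N, pd j G q * Function.update p i t j) + G q * Real.sqrt (-2 * (c * ((1 / 2) * (∑ j : Fin N, Function.update p i t j ^ 2) + V q) + c₀)) + c₁ / Real.sqrt (-2 * (c * ((1 / 2) * (∑ j : Fin N, Function.update p i t j ^ 2) + V q) + c₀)))
      (-(pd i G q) + G q * (-(c * p i) / Real.sqrt (-2 * (c * ((1 / 2) * (∑ j : Fin N, p j ^ 2) + V q) + c₀))) + c * p i * c₁ / Real.sqrt (-2 * (c * ((1 / 2) * (∑ j : Fin N, p j ^ 2) + V q) + c₀)) ^ 3) (p i) := by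
    intro i
    have hne : (-2 * (c * ((1 / 2) * (∑ j : Fin N, Function.update p i (p i) j ^ 2) + V q) + c₀)) ≠ 0 := by
      rw [Function.update_eq_self]; exact ne_of_gt hs
    have hsq := (hEp i).sqrt hne
    have hne' : (fun t => Real.sqrt (-2 * (c * ((1 / 2) * (∑ j : Fin N, Function.update p i t j ^ 2) + V q) + c₀))) (p i) ≠ 0 := by
      simp only [Function.update_eq_self]; exact hfne
    refine HasDerivAt.congr_deriv ((((hSp i).neg).add (hsq.const_mul (G q))).add ((hasDerivAt_const (p i) c₁).div hsq hne')) ?_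
    simp only [Function.update_eq_self]
    set Fa := Real.sqrt (-2 * (c * ((1 / 2) * (∑ j : Fin N, p j ^ 2) + V q) + c₀)) with hFa
    field_simp [hfne]
    ring
  -- identification with the phase-space partial derivatives
  have eQL : ∀ i : Fin N, pdQ i (fun x => (1 / 2) * (∑ i : Fin N, x.2 i ^ 2) + V x.1) (q, p) = pd i V q := fun i => (hLq i).deriv
  have ePL : ∀ i : Fin N, pdP i (fun x => (1 / 2) * (∑ i : Fin N, x.2 i ^ 2) + V x.1) (q, p) = p i := fun i => (hKp i).deriv
  have eQGp : ∀ i : Fin N, pdQ i (fun x => (∑ i : Fin N, pd i G x.1 * x.2 i) + G x.1 * Real.sqrt (-2 * (c * ((1 / 2) * (∑ i : Fin N, x.2 i ^ 2) + V x.1) + c₀)) + c₁ / Real.sqrt (-2 * (c * ((1 / 2) * (∑ i : Fin N, x.2 i ^ 2) + V x.1) + c₀))) (q, p) = (-(c * G q * p i) + pd i G q * Real.sqrt (-2 * (c * ((1 / 2) * (∑ j : Fin N, p j ^ 2) + V q) + c₀)) + G q * (-(c * pd i V q) / Real.sqrt (-2 * (c * ((1 / 2) * (∑ j : Fin N, p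 j ^ 2) + V q) + c₀))) + c * pd i V q * c₁ / Real.sqrt (-2 * (c * ((1 / 2) * (∑ j : Fin N, p j ^ 2) + V q) + c₀)) ^ 3) := fun i => (hQp i).deriv
  have ePGp : ∀ i : Fin N, pdP i (fun x => (∑ i : Fin N, pd i G x.1 * x.2 i) + G x.1 * Real.sqrt (-2 * (c * ((1 / 2) * (∑ i : Fin N, x.2 i ^ 2) + V x.1) + c₀)) + c₁ / Real.sqrt (-2 * (c * ((1 / 2) * (∑ i : Fin N, x.2 i ^ 2) + V x.1) + c₀))) (q, p) = (pd i G q + G q * (-(c * p i) / Real.sqrt (-2 * (c * ((1 / 2) * (∑ j : Fin N, p j ^ 2) + V q) + c₀))) + c * p i * c₁ / Real.sqrt (-2 * (c * ((1 / 2) * (∑ j : Fin N, p j ^ 2) + V q) + c₀)) ^ 3) := fun i => (hPp i).deriv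
  have eQGm : ∀ i : Fin N, pdQ i (fun x => -(∑ i : Fin N, pd i G x.1 * x.2 i) + G x.1 * Real.sqrt (-2 * (c * ((1 / 2) * (∑ i : Fin N, x.2 i ^ 2) + V x.1) + c₀)) + c₁ / Real.sqrt (-2 * (c * ((1 / 2) * (∑ i : Fin N, x.2 i ^ 2) + V x.1) + c₀))) (q, p) = ((c * G q * p i) + pd i G q * Real.sqrt (-2 * (c * ((1 / 2) * (∑ j : Fin N, p j ^ 2) + V q) + c₀)) + G q * (-(c * pd i V q) / Real.sqrt (-2 * (c * ((1 / 2) * (∑ j : Fin N, p j ^ 2) + V q) + c₀))) + c * pd i V q * c₁ / Real.sqrt (-2 * (c * ((1 / 2) * (∑ j : Fin N, p j ^ 2) + V q) + c₀)) ^ 3) := fun i => (hQm i).deriv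
  have ePGm : ∀ i : Fin N, pdP i (fun x => -(∑ i : Fin N, pd i G x.1 * x.2 i) + G x.1 * Real.sqrt (-2 * (c * ((1 / 2) * (∑ i : Fin N, x.2 i ^ 2) + V x.1) + c₀)) + c₁ / Real.sqrt (-2 * (c * ((1 / 2) * (∑ i : Fin N, x.2 i ^ 2) + V x.1) + c₀))) (q, p) = (-(pd i G q) + G q * (-(c * p i) / Real.sqrt (-2 * (c * ((1 / 2) * (∑ j : Fin N, p j ^ 2) + V q) + c₀))) + c * p i * c₁ / Real.sqrt (-2 * (c * ((1 / 2) * (∑ j : Fin N, p j ^ 2) + V q) + c₀)) ^ 3) := fun i => (hPm i).deriv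
  have hW : (∑ i : Fin N, pd i V q * pd i G q) = 2 * (c * V q + c₀) * G q - c₁ := by
    linarith [hVcond q]
  have hF2 : Real.sqrt (-2 * (c * ((1 / 2) * (∑ j : Fin N, p j ^ 2) + V q) + c₀)) * Real.sqrt (-2 * (c * ((1 / 2) * (∑ j : Fin N, p j ^ 2) + V q) + c₀)) = (-2 * (c * ((1 / 2) * (∑ j : Fin N, p j ^ 2) + V q) + c₀)) := Real.mul_self_sqrt hs.le
  constructor
  · show (∑ i : Fin N, (pdP i (fun x => (1 / 2) * (∑ i : Fin N, x.2 i ^ 2) + V x.1) (q, p) * pdQ i (fun x => (∑ i : Fin N, pd i G x.1 * x.2 i) + G x.1 * Real.sqrt (-2 * (c * ((1 / 2) * (∑ i : Fin N, x.2 i ^ 2) + V x.1) + c₀)) + c₁ / Real.sqrt (-2 * (c * ((1 / 2) * (∑ i : Fin N, x.2 i ^ 2) + V x.1) + c₀))) (q, p)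
        - pdQ i (fun x => (1 / 2) * (∑ i : Fin N, x.2 i ^ 2) + V x.1) (q, p) * pdP i (fun x => (∑ i : Fin N, pd i G x.1 * x.2 i) + G x.1 * Real.sqrt (-2 * (c * ((1 / 2) * (∑ i : Fin N, x.2 i ^ 2) + V x.1) + c₀)) + c₁ / Real.sqrt (-2 * (c * ((1 / 2) * (∑ i : Fin N, x.2 i ^ 2) + V x.1) + c₀))) (q, p))) = Real.sqrt (-2 * (c * ((1 / 2) * (∑ j : Fin N, p j ^ 2) + V q) + c₀)) * ((∑ j : Fin N, pd j G q * p j) + G q * Real.sqrt (-2 * (c * ((1 / 2) * (∑ j : Fin N, p j ^ 2) + V q) + c₀)) + c₁ / Real.sqrt (-2 * (c * ((1 / 2) * (∑ j : Fin N, p j ^ 2) + V q) + c₀)))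
    calc (∑ i : Fin N, (pdP i (fun x => (1 / 2) * (∑ i : Fin N, x.2 i ^ 2) + V x.1) (q, p) * pdQ i (fun x => (∑ i : Fin N, pd i G x.1 * x.2 i) + G x.1 * Real.sqrt (-2 * (c * ((1 / 2) * (∑ i : Fin N, x.2 i ^ 2) + V x.1) + c₀)) + c₁ / Real.sqrt (-2 * (c * ((1 / 2) * (∑ i : Fin N, x.2 i ^ 2) + V x.1) + c₀))) (q, p)
        - pdQ i (fun x => (1 / 2) * (∑ i : Fin N, x.2 i ^ 2) + V x.1) (q, p) * pdP i (fun x => (∑ i : Fin N, pd i G x.1 * x.2 i) + G x.1 * Real.sqrt (-2 * (c * ((1 / 2) * (∑ i : Fin N, x.2 i ^ 2) + V x.1) + c₀)) + c₁ / Real.sqrt (-2 * (c * ((1 / 2) * (∑ i : Fin N, x.2 i ^ 2) + V x.1) + c₀))) (q, p)))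
        = ∑ i : Fin N, (p i * (-(c * G q * p i) + pd i G q * Real.sqrt (-2 * (c * ((1 / 2) * (∑ j : Fin N, p j ^ 2) + V q) + c₀)) + G q * (-(c * pd i V q) / Real.sqrt (-2 * (c * ((1 / 2) * (∑ j : Fin N, p j ^ 2) + V q) + c₀))) + c * pd i V q * c₁ / Real.sqrt (-2 * (c * ((1 / 2) * (∑ j : Fin N, p j ^ 2) + V q) + c₀)) ^ 3) - pd i V q * (pd i G q + G q * (-(c * p i) / Real.sqrt (-2 * (c * ((1 / 2) * (∑ j : Fin N, p j ^ 2) + V q) + c₀))) + c * p i * c₁ / Real.sqrt (-2 * (c * ((1 / 2) * (∑ j : Fin N, p j ^ 2) + V q) + c₀)) ^ 3)) :=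
          Finset.sum_congr rfl (fun i _ => by rw [eQL i, ePL i, eQGp i, ePGp i])
      _ = ∑ i : Fin N, (-(c * G q) * p i ^ 2 + Real.sqrt (-2 * (c * ((1 / 2) * (∑ j : Fin N, p j ^ 2) + V q) + c₀)) * (pd i G q * p i) - pd i V q * pd i G q) :=
          Finset.sum_congr rfl (fun i _ => by
            set Fa := Real.sqrt (-2 * (c * ((1 / 2) * (∑ j : Fin N, p j ^ 2) + V q) + c₀)) with hFa
            field_simp [hfne]
            ring)
      _ = -(c * G q) * (∑ i : Fin N, p i ^ 2) + Real.sqrt (-2 * (c * ((1 / 2) * (∑ j : Fin N, p j ^ 2) + V q) + c₀)) * (∑ i : Fin N, pd i G q * p i)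
            - ∑ i : Fin N, pd i V q * pd i G q := by
          simp only [Finset.sum_sub_distrib, Finset.sum_add_distrib, ← Finset.mul_sum]
      _ = Real.sqrt (-2 * (c * ((1 / 2) * (∑ j : Fin N, p j ^ 2) + V q) + c₀)) * ((∑ j : Fin N, pd j G q * p j) + G q * Real.sqrt (-2 * (c * ((1 / 2) * (∑ j : Fin N, p j ^ 2) + V q) + c₀)) + c₁ / Real.sqrt (-2 * (c * ((1 / 2) * (∑ j : Fin N, p j ^ 2) + V q) + c₀))) := by
          have hc₁ : Real.sqrt (-2 * (c * ((1 / 2) * (∑ j : Fin N, p j ^ 2) + V q) + c₀)) * (c₁ / Real.sqrt (-2 * (c * ((1 / 2) * (∑ j : Fin N, p j ^ 2) + V q) + c₀))) = c₁ := by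
            rw [mul_comm]; exact div_mul_cancel₀ c₁ hfne
          have hFG : Real.sqrt (-2 * (c * ((1 / 2) * (∑ j : Fin N, p j ^ 2) + V q) + c₀)) * (G q * Real.sqrt (-2 * (c * ((1 / 2) * (∑ j : Fin N, p j ^ 2) + V q) + c₀))) = G q * (-2 * (c * ((1 / 2) * (∑ j : Fin N, p j ^ 2) + V q) + c₀)) := by linear_combination (G q) * hF2
          rw [hW, mul_add (Real.sqrt (-2 * (c * ((1 / 2) * (∑ j : Fin N, p j ^ 2) + V q) + c₀))), mul_add (Real.sqrt (-2 * (c * ((1 / 2) * (∑ j : Fin N, p j ^ 2) + V q) + c₀))), hc₁, hFG]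
          ring
  · show (∑ i : Fin N, (pdP i (fun x => (1 / 2) * (∑ i : Fin N, x.2 i ^ 2) + V x.1) (q, p) * pdQ i (fun x => -(∑ i : Fin N, pd i G x.1 * x.2 i) + G x.1 * Real.sqrt (-2 * (c * ((1 / 2) * (∑ i : Fin N, x.2 i ^ 2) + V x.1) + c₀)) + c₁ / Real.sqrt (-2 * (c * ((1 / 2) * (∑ i : Fin N, x.2 i ^ 2) + V x.1) + c₀))) (q, p)
        - pdQ i (fun x => (1 / 2) * (∑ i : Fin N, x.2 i ^ 2) + V x.1) (q, p) * pdP i (fun x => -(∑ i : Fin N, pd i G x.1 * x.2 i) + G x.1 * Real.sqrt (-2 * (c * ((1 / 2) * (∑ i : Fin N, x.2 i ^ 2) + V x.1) + c₀)) + c₁ / Real.sqrt (-2 * (c * ((1 / 2) * (∑ i : Fin N, x.2 i ^ 2) + V x.1) + c₀))) (q, p))) = -Real.sqrt (-2 * (c * ((1 / 2) * (∑ j : Fin N, p j ^ 2) + V q) + c₀)) * (-(∑ j : Fin N, pd j G q * p j) + G q * Real.sqrt (-2 * (c * ((1 / 2) * (∑ j : Fin N, p j ^ 2) + V q) + c₀))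 + c₁ / Real.sqrt (-2 * (c * ((1 / 2) * (∑ j : Fin N, p j ^ 2) + V q) + c₀)))
    calc (∑ i : Fin N, (pdP i (fun x => (1 / 2) * (∑ i : Fin N, x.2 i ^ 2) + V x.1) (q, p) * pdQ i (fun x => -(∑ i : Fin N, pd i G x.1 * x.2 i) + G x.1 * Real.sqrt (-2 * (c * ((1 / 2) * (∑ i : Fin N, x.2 i ^ 2) + V x.1) + c₀)) + c₁ / Real.sqrt (-2 * (c * ((1 / 2) * (∑ i : Fin N, x.2 i ^ 2) + V x.1) + c₀))) (q, p)
        - pdQ i (fun x => (1 / 2) * (∑ i : Fin N, x.2 i ^ 2) + V x.1) (q, p) * pdP i (fun x => -(∑ i : Fin N, pd i G x.1 * x.2 i) + G x.1 * Real.sqrt (-2 * (c * ((1 / 2) * (∑ i : Fin N, x.2 i ^ 2) + V x.1) + c₀)) + c₁ / Real.sqrt (-2 * (c * ((1 / 2) * (∑ i : Fin N, x.2 i ^ 2) + V x.1) + c₀))) (q, p)))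
        = ∑ i : Fin N, (p i * ((c * G q * p i) + pd i G q * Real.sqrt (-2 * (c * ((1 / 2) * (∑ j : Fin N, p j ^ 2) + V q) + c₀)) + G q * (-(c * pd i V q) / Real.sqrt (-2 * (c * ((1 / 2) * (∑ j : Fin N, p j ^ 2) + V q) + c₀))) + c * pd i V q * c₁ / Real.sqrt (-2 * (c * ((1 / 2) * (∑ j : Fin N, p j ^ 2) + V q) + c₀)) ^ 3) - pd i V q * (-(pd i G q) + G q * (-(c * p i) / Real.sqrt (-2 * (c * ((1 / 2) * (∑ j : Fin N, p j ^ 2) + V q) + c₀))) + c * p i * c₁ / Real.sqrt (-2 * (c * ((1 / 2) * (∑ j : Fin N, p j ^ 2) + V q) + c₀)) ^ 3)) :=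
          Finset.sum_congr rfl (fun i _ => by rw [eQL i, ePL i, eQGm i, ePGm i])
      _ = ∑ i : Fin N, ((c * G q) * p i ^ 2 + Real.sqrt (-2 * (c * ((1 / 2) * (∑ j : Fin N, p j ^ 2) + V q) + c₀)) * (pd i G q * p i) + pd i V q * pd i G q) :=
          Finset.sum_congr rfl (fun i _ => by
            set Fa := Real.sqrt (-2 * (c * ((1 / 2) * (∑ j : Fin N, p j ^ 2) + V q) + c₀)) with hFa
            field_simp [hfne]
            ring)
      _ = (c * G q) * (∑ i : Fin N, p i ^ 2) + Real.sqrt (-2 * (c * ((1 / 2) * (∑ j : Fin N, p j ^ 2) + V q) + c₀)) * (∑ i : Fin N, pd i G q * p i)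
            + ∑ i : Fin N, pd i V q * pd i G q := by
          simp only [Finset.sum_add_distrib, ← Finset.mul_sum]
      _ = -Real.sqrt (-2 * (c * ((1 / 2) * (∑ j : Fin N, p j ^ 2) + V q) + c₀)) * (-(∑ j : Fin N, pd j G q * p j) + G q * Real.sqrt (-2 * (c * ((1 / 2) * (∑ j : Fin N, p j ^ 2) + V q) + c₀)) + c₁ / Real.sqrt (-2 * (c * ((1 / 2) * (∑ j : Fin N, p j ^ 2) + V q) + c₀))) := by
          have hc₁ : -Real.sqrt (-2 * (c * ((1 / 2) * (∑ j : Fin N, p j ^ 2) + V q) + c₀)) * (c₁ / Real.sqrt (-2 * (c * ((1 / 2) * (∑ j : Fin N, p j ^ 2) + V q) + c₀))) = -c₁ := by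
            rw [neg_mul, mul_comm (Real.sqrt (-2 * (c * ((1 / 2) * (∑ j : Fin N, p j ^ 2) + V q) + c₀))) (c₁ / Real.sqrt (-2 * (c * ((1 / 2) * (∑ j : Fin N, p j ^ 2) + V q) + c₀))), div_mul_cancel₀ c₁ hfne]
          have hFG : -Real.sqrt (-2 * (c * ((1 / 2) * (∑ j : Fin N, p j ^ 2) + V q) + c₀)) * (G q * Real.sqrt (-2 * (c * ((1 / 2) * (∑ j : Fin N, p j ^ 2) + V q) + c₀))) = -(G q * (-2 * (c * ((1 / 2) * (∑ j : Fin N, p j ^ 2) + V q) + c₀))) := by linear_combination (-(G q)) * hF2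
          rw [hW, mul_add (-Real.sqrt (-2 * (c * ((1 / 2) * (∑ j : Fin N, p j ^ 2) + V q) + c₀))), mul_add (-Real.sqrt (-2 * (c * ((1 / 2) * (∑ j : Fin N, p j ^ 2) + V q) + c₀))), hc₁, hFG]
          ring
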